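/- arXiv:1309.2536 — 5 statements merged into one kernel-verified Lean document; each statement's English description precedes it below -/
import Mathlib

section
/- For every integer k ≥ 1, the following identity of polynomials in s over ℚ holds: binom(s,k) = ∑_{q=1}^{k} (s^q / q!) · (−1)^{k−q} · ∑_{k₁+⋯+k_q = k, k_i ≥ 1} 1/(k₁⋯k_q). -/
/-- The polynomial `binom(s,k) = s(s-1)⋯(s-k+1)/k!` in `ℚ[s]`. -/
noncomputable def binomPoly (k : ℕ) : Polynomial ℚ :=
  (k.factorial : ℚ)⁻¹ • ∏ j ∈ Finset.range k, (Polynomial.X - Polynomial.C (j : ℚ))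

/-!
`binom(s,k)` is the coefficient of `x^k` in `(1 + x)^s = exp (s log (1 + x))`, so its coefficient
of `s^q` is `[x^k] log (1 + x)^q / q!`, and expanding `log (1 + x)^q` over compositions of `k`
gives the signed sum. Instead of substituting into `exp`, we check that `[x^k] log (1 + x)^q / q!`
satisfies the recurrence `(k + 1) binom(s,k+1) = (s - k) binom(s,k)`; on the power series side
this is the coefficientwise form of `(1 + x) d/dx log (1 + x) = 1`.
-/

open Finset

def compositionTuples (q k : ℕ) : Finset (Fin q → ℕ) :=
  (Fintype.piFinset fun _ : Fin q => Icc 1 k).filter fun f => ∑ i, f i = k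

namespace PowerSeries

section CommRing

variable {R : Type*} [CommRing R]

theorem coeff_pow_eq_zero_of_lt {φ : R⟦X⟧} (hφ : constantCoeff φ = 0) {q k : ℕ} (h : k < q) :
    coeff k (φ ^ q) = 0 :=
  X_pow_dvd_iff.1 (pow_dvd_pow_of_dvd (X_dvd_iff.2 hφ) q) k h

theorem coeff_pow_eq_sum_compositionTuples {φ : R⟦X⟧} (hφ : constantCoeff φ = 0) (q k : ℕ) :
    coeff k (φ ^ q) = ∑ f ∈ compositionTuples q k, ∏ i, coeff (f i) φ := by
  -- Modulo `X ^ (k + 1)`, `φ` agrees with the polynomial `ψ`, whose `q`-th power expands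
  -- by distributivity into a sum over tuples of exponents in `[1, k]`.
  set ψ : R⟦X⟧ := ∑ n ∈ Icc 1 k, monomial n (coeff n φ)
  have hψ : X ^ (k + 1) ∣ φ - ψ := by
    refine X_pow_dvd_iff.2 fun m hm => ?_
    simp only [ψ, map_sub, map_sum, coeff_monomial, sum_ite_eq, mem_Icc]
    split_ifs
    · exact sub_self _
    · obtain rfl : m = 0 := by omega
      simpa using hφ
  have hcoeff : coeff k (φ ^ q) = coeff k (ψ ^ q) := by
    have := X_pow_dvd_iff.1 (hψ.trans (sub_dvd_pow_sub_pow φ ψ q)) k (lt_add_one k)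
    rwa [map_sub, sub_eq_zero] at this
  rw [hcoeff, ← Fin.prod_const, prod_univ_sum]
  simp only [prod_monomial, map_sum, coeff_monomial, compositionTuples, sum_filter, eq_comm]

end CommRing

section Log

variable {A : Type*} [CommRing A] [Algebra ℚ A]

theorem one_add_X_mul_derivative_log : (1 + X) * d⁄dX A (log A) = 1 := by
  ext n
  rw [deriv_log]
  cases n <;> simp [add_mul, coeff_succ_X_mul, pow_succ]

theorem coeff_log_pow_succ_rec (q k : ℕ) :
    (k + 1) * coeff (k + 1) (log A ^ (q + 1)) + k * coeff k (log A ^ (q + 1)) =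
      (q + 1) * coeff k (log A ^ q) := by
  have h : (1 + X) * d⁄dX A (log A ^ (q + 1)) = C ((q + 1 : ℕ) : A) * log A ^ q := by
    rw [derivative_pow, Nat.add_sub_cancel, mul_left_comm, one_add_X_mul_derivative_log, mul_one,
      map_natCast]
  have hk := congrArg (coeff k) h
  rw [add_mul, one_mul, map_add, coeff_derivative, coeff_C_mul] at hk
  cases k with
  | zero => simpa [add_comm] using hk
  | succ k =>
    rw [coeff_succ_X_mul, coeff_derivative] at hk
    push_cast at hk ⊢
    linear_combination hk

end Log

-- Also valid at `n = 0`, where `(0 : ℚ)⁻¹ = 0`.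
theorem coeff_log_rat (n : ℕ) : coeff n (log ℚ) = (-1) ^ (n + 1) * (n : ℚ)⁻¹ := by
  rcases Nat.eq_zero_or_pos n with rfl | hn
  · simp
  · simp [hn.ne', div_eq_mul_inv]

theorem coeff_log_rat_pow {q k : ℕ} (hqk : q ≤ k) :
    coeff k (log ℚ ^ q) = (-1) ^ (k - q) * ∑ f ∈ compositionTuples q k, ∏ i, (f i : ℚ)⁻¹ := by
  rw [coeff_pow_eq_sum_compositionTuples constantCoeff_log, mul_sum]
  refine sum_congr rfl fun f hf => ?_
  have hsum : ∑ i, f i = k := (mem_filter.1 hf).2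
  have hsign : (-1 : ℚ) ^ (k + q) = (-1) ^ (k - q) := by
    rw [show k + q = k - q + 2 * q by omega, pow_add, pow_mul, neg_one_sq, one_pow, mul_one]
  simp only [coeff_log_rat, prod_mul_distrib, prod_pow_eq_pow_sum, sum_add_distrib, hsum,
    sum_const, card_univ, Fintype.card_fin, smul_eq_mul, mul_one, hsign]

end PowerSeries

open Polynomial
open scoped Nat

theorem binomPoly_zero : binomPoly 0 = 1 := by
  simp [binomPoly]

theorem binomPoly_succ (k : ℕ) :
    binomPoly (k + 1) = C ((k + 1 : ℚ)⁻¹) * ((X - C (k : ℚ)) * binomPoly k) := by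
  rw [binomPoly, binomPoly, prod_range_succ, Nat.factorial_succ, smul_eq_C_mul, smul_eq_C_mul]
  push_cast
  rw [mul_inv, map_mul]
  ring

theorem coeff_binomPoly (k q : ℕ) :
    (binomPoly k).coeff q = PowerSeries.coeff k (PowerSeries.log ℚ ^ q) / q ! := by
  induction k generalizing q with
  | zero =>
    rcases Nat.eq_zero_or_pos q with rfl | hq
    · simp [binomPoly_zero]
    · simp [binomPoly_zero, coeff_one, hq.ne',
        PowerSeries.coeff_pow_eq_zero_of_lt PowerSeries.constantCoeff_log hq]
  | succ k ih =>
    rw [binomPoly_succ, coeff_C_mul, sub_mul, coeff_sub, coeff_C_mul]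
    cases q with
    | zero =>
      rw [mul_coeff_zero, coeff_X_zero, ih]
      rcases Nat.eq_zero_or_pos k with rfl | hk
      · simp
      · simp [PowerSeries.coeff_one, hk.ne']
    | succ q =>
      rw [coeff_X_mul, ih, ih, Nat.factorial_succ]
      have := PowerSeries.coeff_log_pow_succ_rec (A := ℚ) q k
      push_cast
      field_simp
      linear_combination -this

/-- For `k ≥ 1`, as polynomials in `s` over `ℚ`:
`binom(s,k) = ∑_{q=1}^{k} (s^q/q!) (-1)^{k-q} ∑_{k₁+⋯+k_q=k, kᵢ≥1} 1/(k₁⋯k_q)`. -/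
theorem binom_eq_sum_over_compositions (k : ℕ) (hk : 1 ≤ k) :
    binomPoly k =
      ∑ q ∈ Finset.Icc 1 k,
        Polynomial.C ((q.factorial : ℚ)⁻¹ * (-1 : ℚ) ^ (k - q) *
            ∑ f ∈ (Fintype.piFinset fun _ : Fin q => Finset.Icc 1 k).filter
                (fun f => ∑ i, f i = k),
              ∏ i, ((f i : ℚ))⁻¹) * Polynomial.X ^ q := by
  have hdeg : (binomPoly k).natDegree < k + 1 := by
    refine Nat.lt_succ_of_le (natDegree_le_iff_coeff_eq_zero.2 fun q hq => ?_)
    rw [coeff_binomPoly, PowerSeries.coeff_pow_eq_zero_of_lt PowerSeries.constantCoeff_log hq,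
      zero_div]
  conv_lhs => rw [as_sum_range_C_mul_X_pow' _ hdeg]
  rw [← sum_subset (fun q hq => mem_range.2 (Nat.lt_succ_of_le (mem_Icc.1 hq).2))]
  · refine sum_congr rfl fun q hq => ?_
    rw [coeff_binomPoly, PowerSeries.coeff_log_rat_pow (mem_Icc.1 hq).2, div_eq_inv_mul,
      ← mul_assoc]
    rfl
  · intro q hq hq'
    obtain rfl : q = 0 := by simp at hq hq'; omega
    simp [coeff_binomPoly, PowerSeries.coeff_one, Nat.one_le_iff_ne_zero.1 hk]
end

section
/- Let 0 → I → A → A/I → 0 be an extension of associative unital ℂ-algebras, τ : I → ℂ a linear functional vanishing on [A, I] (a hypertrace), τ̃ : A → ℂ any linear extension of τ, and σ : A/I → A a linear section of the quotient map with σ(1) = 1. Then the bilinear functional c(a₀, a₁) = τ̃([σ(a₀), σ(a₁)]) on A/I satisfies: (1) c is antisymmetric, c(a₀,a₁) = −c(a₁,a₀); (2) c is a Hochschild 1-cocycle: c(a₀a₁, a₂) − c(a₀, a₁a₂) + c(a₂a₀, a₁) = 0 for all a₀, a₁, a₂ ∈ A/I. -/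
/-- Given an extension `0 → I → A →π Q → 0` of unital ℂ-algebras (here `I = ker π`),
a linear functional `τ̃ : A → ℂ` whose restriction to `I` is a hypertrace
(`τ̃([A,I]) = 0`), and a linear section `σ : Q → A` of `π` with `σ(1) = 1`,
the bilinear functional `c(a₀,a₁) = τ̃([σ(a₀), σ(a₁)])` on `Q = A/I` is
(1) antisymmetric and (2) a Hochschild 1-cocycle. -/
theorem boundary_of_hypertrace_is_cyclic_one_cocycle
    (A Q : Type*) [Ring A] [Algebra ℂ A] [Ring Q] [Algebra ℂ Q]
    (π : A →ₐ[ℂ] Q) (τ : A →ₗ[ℂ] ℂ)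
    (hyper : ∀ a x : A, π x = 0 → τ (a * x - x * a) = 0)
    (σ : Q →ₗ[ℂ] A) (hσ : ∀ q : Q, π (σ q) = q) (hσ1 : σ 1 = 1) :
    (∀ a₀ a₁ : Q,
      τ (σ a₀ * σ a₁ - σ a₁ * σ a₀) = -τ (σ a₁ * σ a₀ - σ a₀ * σ a₁)) ∧
    (∀ a₀ a₁ a₂ : Q,
      τ (σ (a₀ * a₁) * σ a₂ - σ a₂ * σ (a₀ * a₁))
        - τ (σ a₀ * σ (a₁ * a₂) - σ (a₁ * a₂) * σ a₀)
        + τ (σ (a₂ * a₀) * σ a₁ - σ a₁ * σ (a₂ * a₀)) = 0) := by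
  constructor
  · intro a₀ a₁
    rw [← map_neg]
    congr 1
    noncomm_ring
  · intro a₀ a₁ a₂
    -- key: replacing σ(p*q) by σ p * σ q doesn't change the trace of the commutator
    have key : ∀ (p q : Q) (r : A),
        τ (σ (p * q) * r - r * σ (p * q)) = τ (σ p * σ q * r - r * (σ p * σ q)) := by
      intro p q r
      have hw : π (σ p * σ q - σ (p * q)) = 0 := by
        simp [map_mul, hσ]
      have h0 := hyper r (σ p * σ q - σ (p * q)) hw
      have h1 : τ (σ p * σ q * r - r * (σ p * σ q))
          - τ (σ (p * q) * r - r * σ (p * q)) = 0 := by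
        rw [← map_sub]
        rw [show σ p * σ q * r - r * (σ p * σ q) - (σ (p * q) * r - r * σ (p * q))
            = -(r * (σ p * σ q - σ (p * q)) - (σ p * σ q - σ (p * q)) * r) by noncomm_ring]
        rw [map_neg, h0, neg_zero]
      linear_combination -h1
    have key' : ∀ (p q : Q) (r : A),
        τ (r * σ (p * q) - σ (p * q) * r) = τ (r * (σ p * σ q) - σ p * σ q * r) := by
      intro p q r
      have hw : π (σ p * σ q - σ (p * q)) = 0 := by
        simp [map_mul, hσ]
      have h0 := hyper r (σ p * σ q - σ (p * q)) hw
      have h1 : τ (r * σ (p * q) - σ (p * q) * r)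
          - τ (r * (σ p * σ q) - σ p * σ q * r) = 0 := by
        rw [← map_sub]
        rw [show r * σ (p * q) - σ (p * q) * r - (r * (σ p * σ q) - σ p * σ q * r)
            = -(r * (σ p * σ q - σ (p * q)) - (σ p * σ q - σ (p * q)) * r) by noncomm_ring]
        rw [map_neg, h0, neg_zero]
      linear_combination h1
    rw [key a₀ a₁ (σ a₂), key' a₁ a₂ (σ a₀), key a₂ a₀ (σ a₁)]
    rw [← map_sub, ← map_add]
    rw [show σ a₀ * σ a₁ * σ a₂ - σ a₂ * (σ a₀ * σ a₁)
        - (σ a₀ * (σ a₁ * σ a₂) - σ a₁ * σ a₂ * σ a₀)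
        + (σ a₂ * σ a₀ * σ a₁ - σ a₁ * (σ a₂ * σ a₀)) = 0 by noncomm_ring]
    exact map_zero τ
end

section
/- Let A be an associative unital ℂ-algebra, I a two-sided ideal, and τ : I → ℂ a linear functional vanishing on [A, I]. Suppose u ∈ A/I is invertible. If a, b ∈ A are lifts of u and u⁻¹ respectively (so ab − 1 ∈ I and ba − 1 ∈ I), then the value τ(ab − 1) − τ(ba − 1) does not depend on the choice of the lifts a and b. -/
/-- Let `I` be a two-sided ideal of a unital ℂ-algebra `A` and `τ : I → ℂ` a linear
functional vanishing on `[A, I]`.  If `a, b` and `a', b'` are lifts of an invertible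
element `u ∈ A/I` and of its inverse `u⁻¹` respectively (so `ab - 1, ba - 1 ∈ I` etc.
and `a - a', b - b' ∈ I`), then `τ(ab - 1) - τ(ba - 1)` does not depend on the
choice of the lifts. -/
theorem index_pairing_independent_of_lifts
    (A : Type*) [Ring A] [Algebra ℂ A]
    (I : Submodule ℂ A)
    (hIl : ∀ (a x : A), x ∈ I → a * x ∈ I)
    (hIr : ∀ (a x : A), x ∈ I → x * a ∈ I)
    (τ : I →ₗ[ℂ] ℂ)
    (hyper : ∀ (a x : A) (hx : x ∈ I) (h : a * x - x * a ∈ I),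
      τ ⟨a * x - x * a, h⟩ = 0)
    (a b a' b' : A)
    (hab : a * b - 1 ∈ I) (hba : b * a - 1 ∈ I)
    (hab' : a' * b' - 1 ∈ I) (hba' : b' * a' - 1 ∈ I)
    (ha : a - a' ∈ I) (hb : b - b' ∈ I) :
    τ ⟨a * b - 1, hab⟩ - τ ⟨b * a - 1, hba⟩
      = τ ⟨a' * b' - 1, hab'⟩ - τ ⟨b' * a' - 1, hba'⟩ := by
  have h1 : a * (b - b') - (b - b') * a ∈ I :=
    I.sub_mem (hIl a _ hb) (hIr a _ hb)
  have h2 : b' * (a - a') - (a - a') * b' ∈ I :=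
    I.sub_mem (hIl b' _ ha) (hIr b' _ ha)
  have key : (⟨a * b - 1, hab⟩ : I) - ⟨b * a - 1, hba⟩ - ⟨a' * b' - 1, hab'⟩
      + ⟨b' * a' - 1, hba'⟩
      = (⟨a * (b - b') - (b - b') * a, h1⟩ : I)
        - ⟨b' * (a - a') - (a - a') * b', h2⟩ := by
    apply Subtype.ext
    push_cast
    noncomm_ring
  have h3 := hyper a (b - b') hb h1
  have h4 := hyper b' (a - a') ha h2
  have := congrArg τ key
  simp only [map_sub, map_add, h3, h4] at this
  linear_combination this
end

section
/- Let f : [0,1] → ℂ be smooth and p ∈ ℕ. The function g(z) = ∫₀¹ r^{z−p−1} f(r) dr, which is defined and holomorphic on the half-plane Re z > p, extends to a meromorphic function on ℂ with at most simple poles located at z = p, p−1, p−2, …; moreover its residue at z = 0 equals f^{(p)}(0)/p!. -/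
open MeasureTheory Set Filter intervalIntegral Asymptotics

namespace BReg

noncomputable def a (f : ℝ → ℂ) (k : ℕ) : ℂ :=
  iteratedDerivWithin k f (Set.Icc 0 1) 0 / (k.factorial : ℂ)

noncomputable def T (f : ℝ → ℂ) (N : ℕ) (r : ℝ) : ℂ :=
  ∑ k ∈ Finset.range (N + 1), a f k * (r : ℂ) ^ k

noncomputable def g (f : ℝ → ℂ) (N : ℕ) : ℝ → ℂ :=
  (Set.Ioc (0:ℝ) 1).indicator fun r => f r - T f N r

noncomputable def F (f : ℝ → ℂ) (p N : ℕ) (z : ℂ) : ℂ := mellin (g f N) (z - p)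

noncomputable def G (f : ℝ → ℂ) (p N : ℕ) (z : ℂ) : ℂ :=
  (∑ k ∈ Finset.range (N + 1), a f k / (z - p + k)) + F f p N z

lemma T_eq_taylor (f : ℝ → ℂ) (N : ℕ) (r : ℝ) :
    T f N r = taylorWithinEval f N (Set.Icc 0 1) 0 r := by
  rw [taylor_within_apply, T]
  refine Finset.sum_congr rfl fun k _ => ?_
  rw [a, Complex.real_smul]
  push_cast
  ring

lemma T_cont (f : ℝ → ℂ) (N : ℕ) : Continuous (T f N) := by
  unfold T
  exact continuous_finset_sum _ fun k _ =>
    continuous_const.mul (Complex.continuous_ofReal.pow k)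

lemma taylor_bound {f : ℝ → ℂ} (hf : ContDiffOn ℝ (⊤ : ℕ∞) f (Set.Icc 0 1)) (N : ℕ) :
    ∃ C : ℝ, 0 ≤ C ∧ ∀ r ∈ Set.Icc (0:ℝ) 1, ‖f r - T f N r‖ ≤ C * r ^ (N + 1) := by
  obtain ⟨C, hC⟩ := exists_taylor_mean_remainder_bound (n := N) zero_le_one (hf.of_le (by exact_mod_cast le_top))
  refine ⟨max C 0, le_max_right _ _, fun r hr => ?_⟩
  have := hC r hr
  rw [sub_zero] at this
  rw [T_eq_taylor]
  calc ‖f r - taylorWithinEval f N (Set.Icc 0 1) 0 r‖ ≤ C * r ^ (N + 1) := this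
    _ ≤ max C 0 * r ^ (N + 1) := by
        gcongr
        · exact pow_nonneg hr.1 _
        · exact le_max_left _ _

lemma integrable_cpow_mul {f : ℝ → ℂ} (hf : ContDiffOn ℝ (⊤ : ℕ∞) f (Set.Icc 0 1)) (N : ℕ)
    {s : ℂ} (hs : -(N:ℝ) - 1 < s.re) :
    IntervalIntegrable (fun r : ℝ => (r:ℂ) ^ (s - 1) * (f r - T f N r)) volume 0 1 := by
  obtain ⟨C, hC0, hC⟩ := taylor_bound hf N
  rw [intervalIntegrable_iff_integrableOn_Ioc_of_le zero_le_one]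
  have hmeas : AEStronglyMeasurable (fun r : ℝ => (r:ℂ) ^ (s - 1) * (f r - T f N r))
      (volume.restrict (Set.Ioc (0:ℝ) 1)) := by
    apply ContinuousOn.aestronglyMeasurable _ measurableSet_Ioc
    apply ContinuousOn.mul
    · exact (Complex.continuous_ofReal.continuousOn.cpow continuousOn_const
        fun x hx => Complex.ofReal_mem_slitPlane.2 hx.1)
    · exact ((hf.continuousOn.mono Set.Ioc_subset_Icc_self).sub (T_cont f N).continuousOn)
  have hint : IntegrableOn (fun r : ℝ => C * r ^ (s.re + N)) (Set.Ioc (0:ℝ) 1) volume := by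
    rw [← intervalIntegrable_iff_integrableOn_Ioc_of_le zero_le_one]
    exact (intervalIntegrable_rpow' (by linarith)).const_mul C
  refine Integrable.mono' hint hmeas ?_
  filter_upwards [ae_restrict_mem measurableSet_Ioc] with r hr
  have hr0 : (0:ℝ) < r := hr.1
  calc ‖(r:ℂ) ^ (s - 1) * (f r - T f N r)‖
      = r ^ (s.re - 1) * ‖f r - T f N r‖ := by
        rw [norm_mul, Complex.norm_cpow_eq_rpow_re_of_pos hr0,
          Complex.sub_re, Complex.one_re]
    _ ≤ r ^ (s.re - 1) * (C * r ^ (N + 1)) := by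
        have := hC r ⟨hr0.le, hr.2⟩
        exact mul_le_mul_of_nonneg_left this (Real.rpow_nonneg hr0.le _)
    _ = C * r ^ (s.re + N) := by
        rw [← Real.rpow_natCast r (N + 1), ← mul_assoc, mul_comm _ C, mul_assoc,
          ← Real.rpow_add hr0]
        push_cast
        ring_nf

lemma mono_eq {s : ℂ} (k : ℕ) : Set.EqOn (fun r : ℝ => (r:ℂ) ^ (s - 1) * (r:ℂ) ^ k)
    (fun r : ℝ => (r:ℂ) ^ (s + k - 1)) (Set.Ioc (0:ℝ) 1) := by
  intro r hr
  have hr0 : (r:ℂ) ≠ 0 := by exact_mod_cast hr.1.ne'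
  simp only
  rw [← Complex.cpow_natCast (r:ℂ) k, ← Complex.cpow_add _ _ hr0]
  ring_nf

lemma mono_int {s : ℂ} (k : ℕ) (hs : 0 < s.re + k) :
    IntervalIntegrable (fun r : ℝ => (r:ℂ) ^ (s - 1) * (r:ℂ) ^ k) volume 0 1 := by
  have h1 : -1 < (s + k - 1).re := by
    simp only [Complex.sub_re, Complex.add_re, Complex.one_re, Complex.natCast_re]
    linarith
  rw [intervalIntegrable_iff_integrableOn_Ioc_of_le zero_le_one]
  exact IntegrableOn.congr_fun
    ((intervalIntegrable_iff_integrableOn_Ioc_of_le zero_le_one).1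
      (intervalIntegrable_cpow' h1)) (mono_eq k).symm measurableSet_Ioc

lemma mono_val {s : ℂ} (k : ℕ) (hs : 0 < s.re + k) :
    ∫ r in (0:ℝ)..1, (r:ℂ) ^ (s - 1) * (r:ℂ) ^ k = 1 / (s + k) := by
  have hne : s + k ≠ 0 := by
    intro h
    have : (s + k).re = 0 := by rw [h]; rfl
    rw [Complex.add_re, Complex.natCast_re] at this
    linarith
  have h1 : -1 < (s + k - 1).re := by
    simp only [Complex.sub_re, Complex.add_re, Complex.one_re, Complex.natCast_re]
    linarith
  rw [intervalIntegral.integral_of_le zero_le_one,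
    setIntegral_congr_fun measurableSet_Ioc (mono_eq k),
    ← intervalIntegral.integral_of_le zero_le_one, integral_cpow (Or.inl h1)]
  rw [sub_add_cancel]
  simp [Complex.one_cpow, Complex.zero_cpow hne]

lemma F_eq_integral (f : ℝ → ℂ) (p N : ℕ) (z : ℂ) :
    F f p N z = ∫ r in (0:ℝ)..1, (r:ℂ) ^ (z - p - 1) * (f r - T f N r) := by
  rw [F, mellin, intervalIntegral.integral_of_le zero_le_one]
  have h : ∀ t : ℝ, (t:ℂ) ^ (z - p - 1) • g f N t
      = (Set.Ioc (0:ℝ) 1).indicator (fun r => (r:ℂ) ^ (z - p - 1) * (f r - T f N r)) t := by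
    intro t
    rw [g]
    by_cases ht : t ∈ Set.Ioc (0:ℝ) 1 <;> simp [ht, Set.indicator_of_mem,
      Set.indicator_of_notMem, smul_eq_mul]
  simp_rw [h]
  rw [setIntegral_indicator measurableSet_Ioc]
  congr 1
  rw [Set.inter_eq_right.mpr Set.Ioc_subset_Ioi_self]

lemma sub_re_nat (z : ℂ) (p : ℕ) : (z - (p:ℂ)).re = z.re - p := by
  simp [Complex.sub_re, Complex.natCast_re]

set_option maxHeartbeats 1000000 in
lemma G_consistent {f : ℝ → ℂ} (hf : ContDiffOn ℝ (⊤ : ℕ∞) f (Set.Icc 0 1)) (p : ℕ)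
    {N M : ℕ} (hNM : N ≤ M) {z : ℂ} (hz : (p:ℝ) - N - 1 < z.re) :
    G f p M z = G f p N z := by
  have hcast : (N:ℝ) ≤ (M:ℝ) := Nat.cast_le.mpr hNM
  have hzN : -(N:ℝ) - 1 < (z - (p:ℂ)).re := by rw [sub_re_nat]; linarith
  have hzM : -(M:ℝ) - 1 < (z - (p:ℂ)).re := by rw [sub_re_nat]; linarith
  have hIM : IntervalIntegrable
      (fun r : ℝ => (r:ℂ) ^ (z - p - 1) * (f r - T f M r)) volume 0 1 :=
    integrable_cpow_mul hf M hzM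
  have hIk : ∀ k ∈ Finset.Ico (N+1) (M+1),
      IntervalIntegrable (fun r : ℝ => a f k * ((r:ℂ) ^ (z - p - 1) * (r:ℂ) ^ k))
        volume 0 1 := by
    intro k hk
    have hk' : N + 1 ≤ k := (Finset.mem_Ico.1 hk).1
    have : (0:ℝ) < (z - (p:ℂ)).re + k := by
      rw [sub_re_nat]
      have : (N:ℝ) + 1 ≤ (k:ℝ) := by exact_mod_cast hk'
      linarith
    exact (mono_int k this).const_mul _
  have key : F f p N z = F f p M z + ∑ k ∈ Finset.Ico (N+1) (M+1), a f k / (z - p + k) := by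
    rw [F_eq_integral, F_eq_integral]
    have hsplit : Set.EqOn (fun r : ℝ => (r:ℂ) ^ (z - p - 1) * (f r - T f N r))
        (fun r : ℝ => (r:ℂ) ^ (z - p - 1) * (f r - T f M r)
          + ∑ k ∈ Finset.Ico (N+1) (M+1), a f k * ((r:ℂ) ^ (z - p - 1) * (r:ℂ) ^ k))
        (Set.Ioc (0:ℝ) 1) := by
      intro r _
      simp only
      have hTT : T f M r - T f N r = ∑ k ∈ Finset.Ico (N+1) (M+1), a f k * (r:ℂ) ^ k := by
        rw [T, T, eq_comm, Finset.sum_Ico_eq_sub _ (by omega)]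
      have : (r:ℂ) ^ (z - p - 1) * (f r - T f N r)
          = (r:ℂ) ^ (z - p - 1) * (f r - T f M r)
            + (r:ℂ) ^ (z - p - 1) * (T f M r - T f N r) := by ring
      rw [this, hTT, Finset.mul_sum]
      congr 1
      exact Finset.sum_congr rfl fun k _ => by ring
    have hI2 : IntervalIntegrable (fun x : ℝ => ∑ k ∈ Finset.Ico (N+1) (M+1),
        a f k * ((x:ℂ) ^ (z - p - 1) * (x:ℂ) ^ k)) volume 0 1 := by
      have h := IntervalIntegrable.sum (μ := volume) (a := (0:ℝ)) (b := 1)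
        (f := fun k => fun r : ℝ => a f k * ((r:ℂ) ^ (z - p - 1) * (r:ℂ) ^ k))
        (Finset.Ico (N+1) (M+1)) hIk
      have e : (∑ k ∈ Finset.Ico (N+1) (M+1),
            fun r : ℝ => a f k * ((r:ℂ) ^ (z - p - 1) * (r:ℂ) ^ k))
          = fun x : ℝ => ∑ k ∈ Finset.Ico (N+1) (M+1),
            a f k * ((x:ℂ) ^ (z - p - 1) * (x:ℂ) ^ k) :=
        funext fun x => by simp [Finset.sum_apply]
      rwa [e] at h
    have e1 : (∫ r in (0:ℝ)..1, (r:ℂ) ^ (z - p - 1) * (f r - T f N r))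
        = ∫ r in (0:ℝ)..1, ((r:ℂ) ^ (z - p - 1) * (f r - T f M r)
            + ∑ k ∈ Finset.Ico (N+1) (M+1), a f k * ((r:ℂ) ^ (z - p - 1) * (r:ℂ) ^ k)) := by
      rw [intervalIntegral.integral_of_le zero_le_one,
        intervalIntegral.integral_of_le zero_le_one]
      exact setIntegral_congr_fun measurableSet_Ioc hsplit
    have e2 := intervalIntegral.integral_add hIM hI2
    have e3 := intervalIntegral.integral_finset_sum hIk
    rw [e1, e2, e3]
    congr 1
    refine Finset.sum_congr rfl fun k hk => ?_
    have hk' : N + 1 ≤ k := (Finset.mem_Ico.1 hk).1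
    have hpos : (0:ℝ) < (z - (p:ℂ)).re + k := by
      rw [sub_re_nat]
      have : (N:ℝ) + 1 ≤ (k:ℝ) := by exact_mod_cast hk'
      linarith
    rw [intervalIntegral.integral_const_mul, mono_val k hpos, mul_one_div]
  rw [G, G, key]
  have hsum : ∑ k ∈ Finset.range (M+1), a f k / (z - p + k)
      = (∑ k ∈ Finset.range (N+1), a f k / (z - p + k))
        + ∑ k ∈ Finset.Ico (N+1) (M+1), a f k / (z - p + k) := by
    rw [Finset.sum_Ico_eq_sub _ (by omega)]
    ring
  rw [hsum]
  ring

lemma G_eq_integral {f : ℝ → ℂ} (hf : ContDiffOn ℝ (⊤ : ℕ∞) f (Set.Icc 0 1)) (p N : ℕ)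
    {z : ℂ} (hz : (p:ℝ) < z.re) :
    G f p N z = ∫ r in (0:ℝ)..1, (r:ℂ) ^ (z - p - 1) * f r := by
  have hIf : IntervalIntegrable (fun r : ℝ => (r:ℂ) ^ (z - p - 1) * f r) volume 0 1 := by
    have h1 : -1 < (z - p - 1).re := by
      simp only [Complex.sub_re, Complex.one_re, Complex.natCast_re]
      linarith
    refine (intervalIntegrable_cpow' h1).mul_continuousOn ?_
    rw [Set.uIcc_of_le zero_le_one]
    exact hf.continuousOn
  have hIk : ∀ k ∈ Finset.range (N+1),
      IntervalIntegrable (fun r : ℝ => a f k * ((r:ℂ) ^ (z - p - 1) * (r:ℂ) ^ k))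
        volume 0 1 := by
    intro k hk
    have : (0:ℝ) < (z - (p:ℂ)).re + k := by
      rw [sub_re_nat]
      have : (0:ℝ) ≤ (k:ℝ) := Nat.cast_nonneg _
      linarith
    exact (mono_int k this).const_mul _
  have hI2 : IntervalIntegrable (fun x : ℝ => ∑ k ∈ Finset.range (N+1),
      a f k * ((x:ℂ) ^ (z - p - 1) * (x:ℂ) ^ k)) volume 0 1 := by
    have h := IntervalIntegrable.sum (μ := volume) (a := (0:ℝ)) (b := 1)
      (f := fun k => fun r : ℝ => a f k * ((r:ℂ) ^ (z - p - 1) * (r:ℂ) ^ k))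
      (Finset.range (N+1)) hIk
    have e : (∑ k ∈ Finset.range (N+1),
          fun r : ℝ => a f k * ((r:ℂ) ^ (z - p - 1) * (r:ℂ) ^ k))
        = fun x : ℝ => ∑ k ∈ Finset.range (N+1),
          a f k * ((x:ℂ) ^ (z - p - 1) * (x:ℂ) ^ k) :=
      funext fun x => by simp [Finset.sum_apply]
    rwa [e] at h
  have hIg : IntervalIntegrable
      (fun r : ℝ => (r:ℂ) ^ (z - p - 1) * (f r - T f N r)) volume 0 1 :=
    integrable_cpow_mul hf N (by rw [sub_re_nat]; have : (0:ℝ) ≤ (N:ℝ) := Nat.cast_nonneg _; linarith)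
  have hsplit : Set.EqOn (fun r : ℝ => (r:ℂ) ^ (z - p - 1) * f r)
      (fun r : ℝ => (r:ℂ) ^ (z - p - 1) * (f r - T f N r)
        + ∑ k ∈ Finset.range (N+1), a f k * ((r:ℂ) ^ (z - p - 1) * (r:ℂ) ^ k))
      (Set.Ioc (0:ℝ) 1) := by
    intro r _
    simp only
    have : (r:ℂ) ^ (z - p - 1) * f r
        = (r:ℂ) ^ (z - p - 1) * (f r - T f N r) + (r:ℂ) ^ (z - p - 1) * T f N r := by ring
    rw [this, T, Finset.mul_sum]
    congr 1
    exact Finset.sum_congr rfl fun k _ => by ring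
  have e1 : (∫ r in (0:ℝ)..1, (r:ℂ) ^ (z - p - 1) * f r)
      = ∫ r in (0:ℝ)..1, ((r:ℂ) ^ (z - p - 1) * (f r - T f N r)
          + ∑ k ∈ Finset.range (N+1), a f k * ((r:ℂ) ^ (z - p - 1) * (r:ℂ) ^ k)) := by
    rw [intervalIntegral.integral_of_le zero_le_one,
      intervalIntegral.integral_of_le zero_le_one]
    exact setIntegral_congr_fun measurableSet_Ioc hsplit
  have e2 := intervalIntegral.integral_add hIg hI2
  have e3 := intervalIntegral.integral_finset_sum hIk
  rw [G, F_eq_integral, e1, e2, e3, add_comm]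
  congr 1
  refine Finset.sum_congr rfl fun k hk => ?_
  have hpos : (0:ℝ) < (z - (p:ℂ)).re + k := by
    rw [sub_re_nat]
    have : (0:ℝ) ≤ (k:ℝ) := Nat.cast_nonneg _
    linarith
  rw [intervalIntegral.integral_const_mul, mono_val k hpos, mul_one_div]

lemma F_analyticAt {f : ℝ → ℂ} (hf : ContDiffOn ℝ (⊤ : ℕ∞) f (Set.Icc 0 1)) (p N : ℕ)
    {z₀ : ℂ} (hz₀ : (p:ℝ) - N - 1 < z₀.re) : AnalyticAt ℂ (F f p N) z₀ := by
  have hU : IsOpen {z : ℂ | (p:ℝ) - N - 1 < z.re} :=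
    isOpen_lt continuous_const Complex.continuous_re
  refine DifferentiableOn.analyticAt (s := {z : ℂ | (p:ℝ) - N - 1 < z.re}) ?_
    (hU.mem_nhds hz₀)
  intro z hz
  apply DifferentiableAt.differentiableWithinAt
  have hg_int : Integrable (g f N) := by
    rw [g, integrable_indicator_iff measurableSet_Ioc]
    exact (((hf.continuousOn.sub (T_cont f N).continuousOn).integrableOn_compact
      isCompact_Icc).mono_set Set.Ioc_subset_Icc_self)
  have hloc : LocallyIntegrableOn (g f N) (Set.Ioi 0) :=
    hg_int.locallyIntegrable.locallyIntegrableOn _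
  have htop : g f N =O[atTop] fun x : ℝ => x ^ (-(z.re - p + 1)) := by
    have h0 : g f N =ᶠ[atTop] fun _ => (0:ℂ) := by
      filter_upwards [eventually_gt_atTop (1:ℝ)] with x hx
      rw [g, Set.indicator_of_notMem]
      exact fun hmem => absurd hmem.2 (not_le.mpr hx)
    exact h0.trans_isBigO (isBigO_zero _ _)
  have hbot : g f N =O[nhdsWithin 0 (Set.Ioi 0)] fun x : ℝ => x ^ (-(-(N:ℝ) - 1)) := by
    obtain ⟨C, hC0, hC⟩ := taylor_bound hf N
    rw [Asymptotics.isBigO_iff]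
    refine ⟨C, ?_⟩
    filter_upwards [Ioc_mem_nhdsGT zero_lt_one] with r hr
    rw [g, Set.indicator_of_mem hr]
    have h1 : -(-(N:ℝ) - 1) = ((N:ℝ) + 1) := by ring
    rw [h1, Real.norm_of_nonneg (Real.rpow_nonneg hr.1.le _)]
    have h2 : r ^ ((N:ℝ) + 1) = r ^ (N + 1) := by
      rw [← Real.rpow_natCast r (N + 1)]
      push_cast
      ring_nf
    rw [h2]
    exact hC r ⟨hr.1.le, hr.2⟩
  have hmd : DifferentiableAt ℂ (mellin (g f N)) (z - p) := by
    apply mellin_differentiableAt_of_isBigO_rpow hloc htop ?_ hbot ?_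
    · rw [sub_re_nat]; linarith
    · rw [sub_re_nat]
      have hz' : (p:ℝ) - N - 1 < z.re := hz
      linarith
  exact hmd.comp z (differentiableAt_id.sub (differentiableAt_const _))

noncomputable def Gfull (f : ℝ → ℂ) (p : ℕ) (z : ℂ) : ℂ :=
  G f p (⌈(p:ℝ) - z.re⌉₊) z

lemma Gfull_eq {f : ℝ → ℂ} (hf : ContDiffOn ℝ (⊤ : ℕ∞) f (Set.Icc 0 1)) (p N : ℕ)
    {z : ℂ} (hz : (p:ℝ) - N - 1 < z.re) : Gfull f p z = G f p N z := by
  set M := ⌈(p:ℝ) - z.re⌉₊ with hM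
  have hzM : (p:ℝ) - M - 1 < z.re := by
    rcases le_or_gt ((p:ℝ) - z.re) 0 with h | h
    · have : (0:ℝ) ≤ (M:ℝ) := Nat.cast_nonneg _
      linarith
    · have := Nat.le_ceil ((p:ℝ) - z.re)
      rw [← hM] at this
      linarith
  rw [Gfull, ← hM, ← G_consistent hf p (le_max_right N M) hzM,
    G_consistent hf p (le_max_left N M) hz]

lemma sub_re_nat' (p k : ℕ) : ((p:ℂ) - (k:ℂ)).re = (p:ℝ) - k := by
  simp [Complex.sub_re, Complex.natCast_re]

lemma ratpart_analyticAt {f : ℝ → ℂ} (p : ℕ) (s : Finset ℕ) {z₀ : ℂ}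
    (h : ∀ k ∈ s, z₀ - p + k ≠ 0) :
    AnalyticAt ℂ (fun z => ∑ k ∈ s, a f k / (z - p + k)) z₀ := by
  refine Finset.analyticAt_fun_sum s fun k hk => ?_
  exact (analyticAt_const).div
    (((analyticAt_id).sub analyticAt_const).add analyticAt_const) (h k hk)

end BReg

open BReg MeasureTheory Set Filter

/-- b-regularization (Gil–Loya): for `f` smooth on `[0,1]` and `p ∈ ℕ`, the function
`g(z) = ∫₀¹ r^{z-p-1} f(r) dr`, holomorphic for `Re z > p`, extends to a meromorphic
function on ℂ with at most simple poles at `z = p, p-1, p-2, …`, and its residue at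
`z = 0` equals `f^{(p)}(0)/p!`. -/
theorem b_regularization (f : ℝ → ℂ) (hf : ContDiffOn ℝ (⊤ : ℕ∞) f (Set.Icc 0 1)) (p : ℕ) :
    ∃ G : ℂ → ℂ,
      (∀ z : ℂ, (p : ℝ) < z.re →
        G z = ∫ r in (0:ℝ)..1, (r : ℂ) ^ (z - (p : ℂ) - 1) * f r) ∧
      (∀ z : ℂ, (∀ k : ℕ, z ≠ (p : ℂ) - (k : ℂ)) → AnalyticAt ℂ G z) ∧
      (∀ k : ℕ, ∃ (c : ℂ) (H : ℂ → ℂ), AnalyticAt ℂ H ((p : ℂ) - (k : ℂ)) ∧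
        ∀ᶠ z in nhdsWithin ((p : ℂ) - (k : ℂ)) {((p : ℂ) - (k : ℂ))}ᶜ,
          G z = c / (z - ((p : ℂ) - (k : ℂ))) + H z) ∧
      (∃ H : ℂ → ℂ, AnalyticAt ℂ H 0 ∧
        ∀ᶠ z in nhdsWithin (0 : ℂ) {(0 : ℂ)}ᶜ,
          G z = iteratedDerivWithin p f (Set.Icc 0 1) 0 / ((p.factorial : ℂ) * z)
            + H z) := by
  refine ⟨Gfull f p, ?_, ?_, ?_, ?_⟩
  · -- half-plane identity
    intro z hz
    rw [Gfull_eq hf p 0 (by push_cast; linarith)]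
    exact G_eq_integral hf p 0 hz
  · -- analyticity away from poles
    intro z₀ hz₀
    set N := ⌈(p:ℝ) - z₀.re⌉₊ + 1 with hN
    have hzN : (p:ℝ) - N - 1 < z₀.re := by
      have h1 : (p:ℝ) - z₀.re ≤ ⌈(p:ℝ) - z₀.re⌉₊ := by
        rcases le_or_gt ((p:ℝ) - z₀.re) 0 with h | h
        · exact h.trans (Nat.cast_nonneg _)
        · exact Nat.le_ceil _
      have : ((N:ℝ)) = (⌈(p:ℝ) - z₀.re⌉₊ : ℝ) + 1 := by rw [hN]; push_cast; ring
      linarith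
    have hGN : AnalyticAt ℂ (G f p N) z₀ := by
      apply AnalyticAt.add
      · refine ratpart_analyticAt p _ fun k _ => ?_
        intro h
        exact hz₀ k (by linear_combination h)
      · exact F_analyticAt hf p N hzN
    refine hGN.congr ?_
    have hU : IsOpen {z : ℂ | (p:ℝ) - N - 1 < z.re} :=
      isOpen_lt continuous_const Complex.continuous_re
    filter_upwards [hU.mem_nhds hzN] with z hz
    exact (Gfull_eq hf p N hz).symm
  · -- pole structure at p - k
    intro k
    refine ⟨a f k, fun z => (∑ j ∈ Finset.range k, a f j / (z - p + j)) + F f p k z,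
      ?_, ?_⟩
    · apply AnalyticAt.add
      · refine ratpart_analyticAt p _ fun j hj => ?_
        have hjk : j < k := Finset.mem_range.1 hj
        have : ((p:ℂ) - k) - p + j = (j:ℂ) - k := by ring
        rw [this, sub_ne_zero]
        exact_mod_cast hjk.ne
      · refine F_analyticAt hf p k ?_
        rw [sub_re_nat' p k]
        linarith
    · have hU : IsOpen {z : ℂ | (p:ℝ) - k - 1 < z.re} :=
        isOpen_lt continuous_const Complex.continuous_re
      have hmem : ((p:ℂ) - k) ∈ {z : ℂ | (p:ℝ) - k - 1 < z.re} := by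
        show (p:ℝ) - k - 1 < ((p:ℂ) - k).re
        rw [sub_re_nat' p k]
        linarith
      have hEv : ∀ᶠ z in nhds ((p:ℂ) - (k:ℂ)),
          Gfull f p z = a f k / (z - ((p:ℂ) - k)) + ((∑ j ∈ Finset.range k,
            a f j / (z - p + j)) + F f p k z) := by
        filter_upwards [hU.mem_nhds hmem] with z hz
        rw [Gfull_eq hf p k hz, BReg.G, Finset.sum_range_succ]
        have h1 : z - ((p:ℂ) - k) = z - p + k := by ring
        rw [h1]
        ring
      exact hEv.filter_mono nhdsWithin_le_nhds
  · -- residue at 0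
    refine ⟨fun z => (∑ j ∈ Finset.range p, a f j / (z - p + j)) + F f p p z, ?_, ?_⟩
    · apply AnalyticAt.add
      · refine ratpart_analyticAt p _ fun j hj => ?_
        have hjp : j < p := Finset.mem_range.1 hj
        have : (0:ℂ) - p + j = (j:ℂ) - p := by ring
        rw [this, sub_ne_zero]
        exact_mod_cast hjp.ne
      · refine F_analyticAt hf p p ?_
        simp only [Complex.zero_re]
        linarith
    · have hU : IsOpen {z : ℂ | (p:ℝ) - p - 1 < z.re} :=
        isOpen_lt continuous_const Complex.continuous_re
      have hmem : (0:ℂ) ∈ {z : ℂ | (p:ℝ) - p - 1 < z.re} := by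
        show (p:ℝ) - p - 1 < (0:ℂ).re
        simp only [Complex.zero_re]
        linarith
      have hEv : ∀ᶠ z in nhds (0:ℂ),
          Gfull f p z = iteratedDerivWithin p f (Set.Icc 0 1) 0 / ((p.factorial : ℂ) * z)
            + ((∑ j ∈ Finset.range p, a f j / (z - p + j)) + F f p p z) := by
        filter_upwards [hU.mem_nhds hmem] with z hz
        rw [Gfull_eq hf p p hz, BReg.G, Finset.sum_range_succ]
        have h1 : z - (p:ℂ) + (p:ℂ) = z := by ring
        rw [h1, BReg.a, div_div]
        ring
      exact hEv.filter_mono nhdsWithin_le_nhds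
end

section
/- Let A be a unital associative ℂ-algebra and B = ⊕_{n≥0} A^{⊗n} its bar construction. Define ∂̄ : A ⊗ B → B by ∂̄(a₁ ⊗ (a₂,…,a_n)) = ∑_{i=1}^{n} (−1)^{i(n−1)} (a_{i+1},…,a_n, a₁, a₂,…,a_i) and β : B → A ⊗ B by β(a₁,…,a_n) = (−1)^{n−1} a_n ⊗ (a₁,…,a_{n−1}) − a₁ ⊗ (a₂,…,a_n). Then the compositions satisfy ∂̄ ∘ β = 0 and β ∘ ∂̄ = 0, i.e. the 2-periodic sequence … → B →^β A⊗B →^{∂̄} B →^β … is a complex. -/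
open scoped TensorProduct
open PiTensorProduct

/-!
Write every elementary tensor of `A ⊗ A^{⊗n}` as `x₀ ⊗ (x₁,…,xₙ)` for a word `x` of length
`n + 1`, and let `ρᵏ x` be the cyclic rotation `j ↦ x (j + k)`. Then `β x = (-1)ⁿ ρ⁻¹x - x` and
`∂̄ x = ∑ᵢ (-1)^{(i+1)n} ρ^{i+1} x`. In both composites the sign `(-1)ⁿ` shifts the rotation
index by one, so each composite is a telescoping sum `∑ᵢ (gᵢ - gᵢ₊₁)` of `gᵢ = (-1)^{in} ρⁱ x`,
and `g` is periodic of period `n + 1` because `(n + 1) n` is even.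
-/

namespace QuillenComplex

section Rotation

variable {α : Type*} {n : ℕ}

def rotate (x : Fin (n + 1) → α) (k : ℕ) : Fin (n + 1) → α :=
  fun j => x ⟨((j : ℕ) + k) % (n + 1), Nat.mod_lt _ n.succ_pos⟩

lemma rotate_rotate (x : Fin (n + 1) → α) (k l : ℕ) : rotate (rotate x k) l = rotate x (k + l) := by
  funext j; simp only [rotate, Nat.mod_add_mod, add_assoc, add_comm l]

lemma rotate_add_self (x : Fin (n + 1) → α) (k : ℕ) : rotate x (k + (n + 1)) = rotate x k := by
  funext j; simp only [rotate, ← add_assoc (j : ℕ), Nat.add_mod_right]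

lemma cons_last_castSucc_eq_rotate (x : Fin (n + 1) → α) :
    (Fin.cons (x (Fin.last n)) (fun j : Fin n => x j.castSucc) : Fin (n + 1) → α) = rotate x n := by
  funext j
  refine Fin.cases ?_ (fun j => ?_) j
  · simp [rotate, Fin.last]
  · simp only [Fin.cons_succ, rotate, Fin.val_succ]
    congr 1; ext
    change (j : ℕ) = ((j : ℕ) + 1 + n) % (n + 1)
    rw [add_assoc, add_comm 1, Nat.add_mod_right, Nat.mod_eq_of_lt (by omega)]

end Rotation

lemma neg_one_pow_mul_succ_mul_self {M : Type*} [Monoid M] [HasDistribNeg M] (n : ℕ) :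
    (-1 : M) ^ ((n + 1) * n) = 1 :=
  (mul_comm n (n + 1) ▸ Nat.even_mul_succ_self n).neg_one_pow

lemma neg_one_pow_mul_neg_one_pow_succ_mul {M : Type*} [Monoid M] [HasDistribNeg M] (n i : ℕ) :
    (-1 : M) ^ n * (-1) ^ ((i + 1) * n) = (-1) ^ (i * n) := by
  rw [← pow_add, show n + (i + 1) * n = i * n + 2 * n by ring, pow_add, pow_mul (-1 : M) 2,
    neg_one_sq, one_pow, mul_one]

lemma sum_signed_rotate_sub_eq_zero {R M α : Type*} [Ring R] [AddCommGroup M] [Module R M] {n : ℕ}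
    (F : (Fin (n + 1) → α) → M) (x : Fin (n + 1) → α) :
    ∑ i ∈ Finset.range (n + 1),
      ((-1 : R) ^ (i * n) • F (rotate x i) - (-1 : R) ^ ((i + 1) * n) • F (rotate x (i + 1)))
      = 0 := by
  rw [Finset.sum_range_sub' (fun i => (-1 : R) ^ (i * n) • F (rotate x i)),
    neg_one_pow_mul_succ_mul_self, ← zero_add (n + 1), rotate_add_self]
  simp

section Complex

open Finset

variable (R : Type*) {A : Type*} [CommRing R] [AddCommGroup A] [Module R A] {n : ℕ}

def splitHead (x : Fin (n + 1) → A) : A ⊗[R] (⨂[R] _ : Fin n, A) :=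
  x 0 ⊗ₜ tprod R (Fin.tail x)

@[simp]
lemma splitHead_cons (a : A) (b : Fin n → A) :
    splitHead R (Fin.cons a b : Fin (n + 1) → A) = a ⊗ₜ tprod R b := by
  simp [splitHead]

variable {R}
variable (dbar : A ⊗[R] (⨂[R] _ : Fin n, A) →ₗ[R] (⨂[R] _ : Fin (n + 1), A))
  (beta : (⨂[R] _ : Fin (n + 1), A) →ₗ[R] A ⊗[R] (⨂[R] _ : Fin n, A))

lemma dbar_comp_beta_eq_zero
    (hdbar : ∀ x : Fin (n + 1) → A, dbar (splitHead R x) =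
      ∑ i ∈ range (n + 1), (-1 : R) ^ ((i + 1) * n) • tprod R (rotate x (i + 1)))
    (hbeta : ∀ x : Fin (n + 1) → A,
      beta (tprod R x) = (-1 : R) ^ n • splitHead R (rotate x n) - splitHead R x) :
    dbar ∘ₗ beta = 0 := by
  ext x
  have hrot : ∀ i, rotate (rotate x n) (i + 1) = rotate x i := fun i => by
    rw [rotate_rotate, show n + (i + 1) = i + (n + 1) by ring, rotate_add_self]
  simp only [LinearMap.compMultilinearMap_apply, LinearMap.comp_apply, LinearMap.zero_apply]
  rw [hbeta, map_sub, map_smul, hdbar, hdbar, smul_sum, ← sum_sub_distrib]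
  simp only [smul_smul, neg_one_pow_mul_neg_one_pow_succ_mul, hrot]
  exact sum_signed_rotate_sub_eq_zero (PiTensorProduct.tprod R) x

lemma beta_comp_dbar_eq_zero
    (hdbar : ∀ x : Fin (n + 1) → A, dbar (splitHead R x) =
      ∑ i ∈ range (n + 1), (-1 : R) ^ ((i + 1) * n) • tprod R (rotate x (i + 1)))
    (hbeta : ∀ x : Fin (n + 1) → A,
      beta (tprod R x) = (-1 : R) ^ n • splitHead R (rotate x n) - splitHead R x) :
    beta ∘ₗ dbar = 0 := by
  ext a b
  have hrot : ∀ x : Fin (n + 1) → A, ∀ i, rotate (rotate x (i + 1)) n = rotate x i := fun x i => by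
    rw [rotate_rotate, show i + 1 + n = i + (n + 1) by ring, rotate_add_self]
  simp only [TensorProduct.AlgebraTensorModule.curry_apply, TensorProduct.curry_apply,
    LinearMap.coe_restrictScalars, LinearMap.compMultilinearMap_apply,
    LinearMap.comp_apply, LinearMap.zero_apply]
  rw [← splitHead_cons, hdbar, map_sum]
  simp only [map_smul, hbeta, smul_sub, smul_smul, mul_comm _ ((-1 : R) ^ n),
    neg_one_pow_mul_neg_one_pow_succ_mul, hrot]
  exact sum_signed_rotate_sub_eq_zero (splitHead R) _

end Complex

end QuillenComplex

open QuillenComplex in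
/-- Quillen's 2-periodic complex `… → B →^β A⊗B →^∂̄ B →^β …` is a complex:
for the (graded components of the) maps
`∂̄(a₁ ⊗ (a₂,…,a_n)) = ∑_{i=1}^{n} (-1)^{i(n-1)} (a_{i+1},…,a_n,a₁,…,a_i)` and
`β(a₁,…,a_n) = (-1)^{n-1} a_n ⊗ (a₁,…,a_{n-1}) - a₁ ⊗ (a₂,…,a_n)`, the
compositions `∂̄ ∘ β` and `β ∘ ∂̄` vanish. -/
theorem quillen_periodic_complex
    (A : Type*) [Ring A] [Algebra ℂ A] (n : ℕ)
    (dbar : A ⊗[ℂ] (⨂[ℂ] _ : Fin n, A) →ₗ[ℂ] (⨂[ℂ] _ : Fin (n + 1), A))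
    (beta : (⨂[ℂ] _ : Fin (n + 1), A) →ₗ[ℂ] A ⊗[ℂ] (⨂[ℂ] _ : Fin n, A))
    (hdbar : ∀ (a₁ : A) (b : Fin n → A),
      dbar (a₁ ⊗ₜ[ℂ] tprod ℂ b) =
        ∑ i ∈ Finset.range (n + 1),
          ((-1 : ℂ) ^ ((i + 1) * n)) •
            tprod ℂ (fun j : Fin (n + 1) =>
              (Fin.cons a₁ b : Fin (n + 1) → A)
                ⟨((j : ℕ) + (i + 1)) % (n + 1), Nat.mod_lt _ (Nat.succ_pos n)⟩))
    (hbeta : ∀ a : Fin (n + 1) → A,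
      beta (tprod ℂ a) =
        ((-1 : ℂ) ^ n) •
            (a (Fin.last n) ⊗ₜ[ℂ] tprod ℂ (fun j : Fin n => a j.castSucc))
          - a 0 ⊗ₜ[ℂ] tprod ℂ (fun j : Fin n => a j.succ)) :
    dbar ∘ₗ beta = 0 ∧ beta ∘ₗ dbar = 0 := by
  have hdbar' : ∀ x : Fin (n + 1) → A, dbar (splitHead ℂ x) =
      ∑ i ∈ Finset.range (n + 1), (-1 : ℂ) ^ ((i + 1) * n) • tprod ℂ (rotate x (i + 1)) := by
    intro x
    rw [← Fin.cons_self_tail x, splitHead_cons, hdbar]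
    rfl
  have hbeta' : ∀ x : Fin (n + 1) → A,
      beta (tprod ℂ x) = (-1 : ℂ) ^ n • splitHead ℂ (rotate x n) - splitHead ℂ x := by
    intro x
    rw [hbeta, ← cons_last_castSucc_eq_rotate, splitHead_cons]
    rfl
  exact ⟨dbar_comp_beta_eq_zero dbar beta hdbar' hbeta',
    beta_comp_dbar_eq_zero dbar beta hdbar' hbeta'⟩
end
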